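/- Let X be a finite totally ordered set, M a QHS on X, and u = u_1…u_m a singular monomial with respect to M such that u_m is pure. Suppose 1 ≤ k < m and v = v_1…v_k is a degree-k monomial with v − u_1…u_k ∈ I_M. Then there exists a degree-m monomial w = w_1…w_m such that w_m > v_k and u − w ∈ I_M. -/

import Mathlib

noncomputable section

/-- The monomial in the free algebra `K⟨X⟩ = MonoidAlgebra K (FreeMonoid X)`
corresponding to a word `w`. -/
def mOfW (K : Type*) [Field K] {X : Type*} (w : FreeMonoid X) :
    MonoidAlgebra K (FreeMonoid X) :=
  MonoidAlgebra.single w 1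

/-- The degree-`m` monomial `u_1 u_2 ⋯ u_m`. -/
def mOf (K : Type*) [Field K] {X : Type*} {m : ℕ} (u : Fin m → X) :
    MonoidAlgebra K (FreeMonoid X) :=
  mOfW K (FreeMonoid.ofList (List.ofFn u))

/-- The degree-2 monomial `ab`. -/
def m2 (K : Type*) [Field K] {X : Type*} (a b : X) :
    MonoidAlgebra K (FreeMonoid X) :=
  mOfW K (FreeMonoid.of a * FreeMonoid.of b)

/-- The support of an element of `K⟨X⟩`: the set of words occurring with
nonzero coefficient. -/
def suppOf {K X : Type*} [Field K] (f : MonoidAlgebra K (FreeMonoid X)) :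
    Finset (FreeMonoid X) :=
  Finsupp.support f.coeff

/-- The two-sided ideal generated by a set `s` in a `K`-algebra, viewed as the
`K`-submodule spanned by all products `p * a * q` with `a ∈ s`. -/
def idealSpan (K : Type*) [Field K] {A : Type*} [Ring A] [Algebra K A]
    (s : Set A) : Submodule K A :=
  Submodule.span K {x | ∃ p q : A, ∃ a ∈ s, x = p * a * q}

/-- `M` is a Quasierhöhungssystem (QHS) on the totally ordered set `X`. -/
def IsQHS (K : Type*) [Field K] {X : Type*} [LinearOrder X]
    (M : Set (MonoidAlgebra K (FreeMonoid X))) : Prop :=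
  M.PairwiseDisjoint (fun g => (suppOf g : Set (FreeMonoid X))) ∧
  (⋃ g ∈ M, (suppOf g : Set (FreeMonoid X))) =
    {w | ∃ a b : X, b ≤ a ∧ w = FreeMonoid.of a * FreeMonoid.of b} ∧
  ∀ g ∈ M,
    (∃ a b : X, b ≤ a ∧ g = m2 K a b) ∨
    (∃ a b c d : X, d ≤ c ∧ c < b ∧ b ≤ a ∧ g = m2 K a b - m2 K c d) ∨
    (∃ a b d : X, d < b ∧ b < a ∧ g = m2 K a b - m2 K b d)

/-- The maximal element `b = max X`. -/
def topEl (X : Type*) [Fintype X] [LinearOrder X] [Nonempty X] : X :=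
  Finset.univ.max' Finset.univ_nonempty

/-- The minimal element `a = min X`. -/
def botEl (X : Type*) [Fintype X] [LinearOrder X] [Nonempty X] : X :=
  Finset.univ.min' Finset.univ_nonempty

/-- The ideal `I_M`, generated by `M' = M \ {ba}` where `a = min X`, `b = max X`. -/
def qhsIdeal (K : Type*) [Field K] {X : Type*} [Fintype X] [LinearOrder X] [Nonempty X]
    (M : Set (MonoidAlgebra K (FreeMonoid X))) :
    Submodule K (MonoidAlgebra K (FreeMonoid X)) :=
  idealSpan K (M \ {m2 K (topEl X) (botEl X)})

/-- The right-to-left lexicographical strict order on degree-`m` monomials. -/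
def rlLt {X : Type*} [LinearOrder X] {m : ℕ} (u v : Fin m → X) : Prop :=
  ∃ j : Fin m, u j < v j ∧ ∀ l : Fin m, j < l → u l = v l

/-- The monomial `u` is minimal with respect to the QHS `M`. -/
def MinimalMon (K : Type*) [Field K] {X : Type*} [Fintype X] [LinearOrder X] [Nonempty X]
    (M : Set (MonoidAlgebra K (FreeMonoid X))) {m : ℕ} (u : Fin m → X) : Prop :=
  mOf K u ∉ qhsIdeal K M ∧
    ∀ v : Fin m → X, mOf K u - mOf K v ∈ qhsIdeal K M → u = v ∨ rlLt u v

/-- The monomial `u` is tame with respect to the QHS `M`. -/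
def TameMon (K : Type*) [Field K] {X : Type*} [Fintype X] [LinearOrder X] [Nonempty X]
    (M : Set (MonoidAlgebra K (FreeMonoid X))) {m : ℕ} (u : Fin m → X) : Prop :=
  MinimalMon K M u ∧ ∃ v : Fin m → X, ∃ j : Fin m,
    mOf K u - mOf K v ∈ qhsIdeal K M ∧ v j = topEl X ∧ ∀ l : Fin m, j < l → v l = u l

/-- The monomial `u` is singular with respect to the QHS `M`: minimal and not tame. -/
def SingularMon (K : Type*) [Field K] {X : Type*} [Fintype X] [LinearOrder X] [Nonempty X]
    (M : Set (MonoidAlgebra K (FreeMonoid X))) {m : ℕ} (u : Fin m → X) : Prop :=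
  MinimalMon K M u ∧ ¬ TameMon K M u

/-- The QHS `M` is regular: for some positive `m` there are no singular monomials
of degree `m`. -/
def RegularQHS (K : Type*) [Field K] {X : Type*} [Fintype X] [LinearOrder X] [Nonempty X]
    (M : Set (MonoidAlgebra K (FreeMonoid X))) : Prop :=
  ∃ m : ℕ, 0 < m ∧ ∀ u : Fin m → X, ¬ SingularMon K M u

/-- `e ∈ X` is pure with respect to `M`: whenever `ab - ce ∈ M`,
one has `a ≥ b > c ≥ e`. -/
def PureEl (K : Type*) [Field K] {X : Type*} [LinearOrder X]
    (M : Set (MonoidAlgebra K (FreeMonoid X))) (e : X) : Prop :=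
  ∀ a b c : X, m2 K a b - m2 K c e ∈ M → e ≤ c ∧ c < b ∧ b ≤ a

/-!
Starting from `u ≡ v u_{k+1} ⋯ u_m`, move the letters of `u` across the boundary one at a time,
keeping the last letter `x` of the left part weakly increasing. If the next letter `y` exceeds
`x`, just append it. Otherwise `xy` lies in the support of some relation of `M`, and it can be
neither the excluded `ba` (then `u` would be tame), nor a monomial relation (then `u ∈ I_M`),
nor the leading monomial of a binomial `xy - cd` (rewriting would give a congruent word smaller
than `u`). So `xy` is the trailing monomial of some `ab - xy ∈ M`, and rewriting it to `ab`
makes the new last letter `b ≥ x`. For the last letter `y = u_m`, purity gives `b > x`.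
-/

section Words

variable {K : Type*} [Field K] {X : Type*}

lemma mOfW_mul (w w' : FreeMonoid X) : mOfW K (w * w') = mOfW K w * mOfW K w' := by
  rw [mOfW, mOfW, mOfW, MonoidAlgebra.single_mul_single, one_mul]

lemma mOfW_ofList_append (l l' : List X) :
    mOfW K (FreeMonoid.ofList (l ++ l')) =
      mOfW K (FreeMonoid.ofList l) * mOfW K (FreeMonoid.ofList l') := by
  rw [FreeMonoid.ofList_append, mOfW_mul]

lemma m2_eq_mOfW_ofList (a b : X) : m2 K a b = mOfW K (FreeMonoid.ofList [a, b]) := rfl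

lemma of_mul_of_eq_of_mul_of_iff {a b c d : X} :
    FreeMonoid.of a * FreeMonoid.of b = FreeMonoid.of c * FreeMonoid.of d ↔ a = c ∧ b = d := by
  refine ⟨fun h => by simpa using congrArg FreeMonoid.toList h, ?_⟩
  rintro ⟨rfl, rfl⟩
  rfl

lemma m2_eq_m2_iff {a b c d : X} : m2 K a b = m2 K c d ↔ a = c ∧ b = d := by
  rw [m2, m2, mOfW, mOfW, MonoidAlgebra.single_left_inj one_ne_zero, of_mul_of_eq_of_mul_of_iff]

lemma eq_of_mem_suppOf_m2 {a b x y : X}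
    (h : FreeMonoid.of x * FreeMonoid.of y ∈ suppOf (m2 K a b)) : x = a ∧ y = b :=
  of_mul_of_eq_of_mul_of_iff.mp (Finset.mem_singleton.mp (Finsupp.support_single_subset h))

lemma eq_of_mem_suppOf_m2_sub_m2 {a b c d x y : X}
    (h : FreeMonoid.of x * FreeMonoid.of y ∈ suppOf (m2 K a b - m2 K c d)) :
    (x = a ∧ y = b) ∨ (x = c ∧ y = d) := by
  classical
  rcases Finset.mem_union.mp (Finsupp.support_sub h) with h | h
  · exact .inl (eq_of_mem_suppOf_m2 h)
  · exact .inr (eq_of_mem_suppOf_m2 h)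

lemma m2_sub_m2_ne_m2 {a b c d e f : X} (hbd : b ≠ d) : m2 K a b - m2 K c d ≠ m2 K e f := by
  classical
  intro h
  have hab := congrArg (fun g => g.coeff (FreeMonoid.of a * FreeMonoid.of b)) h
  have hcd := congrArg (fun g => g.coeff (FreeMonoid.of c * FreeMonoid.of d)) h
  simp only [m2, mOfW, MonoidAlgebra.coeff_sub, MonoidAlgebra.coeff_single, Finsupp.sub_apply,
    Finsupp.single_apply, of_mul_of_eq_of_mul_of_iff] at hab hcd
  grind

lemma mul_right_mem_idealSpan {A : Type*} [Ring A] [Algebra K A] {s : Set A} {x : A}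
    (hx : x ∈ idealSpan K s) (q : A) : x * q ∈ idealSpan K s := by
  have : idealSpan K s ≤ (idealSpan K s).comap (LinearMap.mulRight K q) := by
    refine Submodule.span_le.mpr ?_
    rintro _ ⟨p, r, a, ha, rfl⟩
    exact Submodule.subset_span ⟨p, r * q, a, ha, by simp [mul_assoc]⟩
  exact this hx

end Words

section Congruence

variable {K : Type*} [Field K] {X : Type*} [Fintype X] [LinearOrder X] [Nonempty X]
  {M : Set (MonoidAlgebra K (FreeMonoid X))}

variable (K M) in
def QHSCong (l l' : List X) : Prop :=
  mOfW K (FreeMonoid.ofList l) - mOfW K (FreeMonoid.ofList l') ∈ qhsIdeal K M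

lemma mul_mul_mem_qhsIdeal {g : MonoidAlgebra K (FreeMonoid X)}
    (hg : g ∈ M \ {m2 K (topEl X) (botEl X)}) (p q : MonoidAlgebra K (FreeMonoid X)) :
    p * g * q ∈ qhsIdeal K M :=
  Submodule.subset_span ⟨p, q, g, hg, rfl⟩

lemma qhsCong_ofFn_iff {m n : ℕ} {u : Fin m → X} {w : Fin n → X} :
    QHSCong K M (List.ofFn u) (List.ofFn w) ↔ mOf K u - mOf K w ∈ qhsIdeal K M :=
  Iff.rfl

namespace QHSCong

lemma symm {l l' : List X} (h : QHSCong K M l l') : QHSCong K M l' l := by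
  simpa only [QHSCong, neg_sub] using Submodule.neg_mem _ h

lemma trans {l l' l'' : List X} (h : QHSCong K M l l') (h' : QHSCong K M l' l'') :
    QHSCong K M l l'' := by
  simpa only [QHSCong, sub_add_sub_cancel] using Submodule.add_mem _ h h'

lemma append_right {l l' : List X} (h : QHSCong K M l l') (s : List X) :
    QHSCong K M (l ++ s) (l' ++ s) := by
  rw [QHSCong, mOfW_ofList_append, mOfW_ofList_append, ← sub_mul]
  exact mul_right_mem_idealSpan h _

end QHSCong

lemma mOfW_mem_qhsIdeal_of_m2_mem {a b : X} (hg : m2 K a b ∈ M \ {m2 K (topEl X) (botEl X)})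
    (p s : List X) : mOfW K (FreeMonoid.ofList (p ++ a :: b :: s)) ∈ qhsIdeal K M := by
  have := mul_mul_mem_qhsIdeal hg (mOfW K (FreeMonoid.ofList p)) (mOfW K (FreeMonoid.ofList s))
  simpa only [m2_eq_mOfW_ofList, ← mOfW_ofList_append, List.append_assoc, List.cons_append,
    List.nil_append] using this

lemma qhsCong_of_m2_sub_m2_mem {a b c d : X}
    (hg : m2 K a b - m2 K c d ∈ M \ {m2 K (topEl X) (botEl X)}) (p s : List X) :
    QHSCong K M (p ++ a :: b :: s) (p ++ c :: d :: s) := by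
  have := mul_mul_mem_qhsIdeal hg (mOfW K (FreeMonoid.ofList p)) (mOfW K (FreeMonoid.ofList s))
  simpa only [QHSCong, m2_eq_mOfW_ofList, mul_sub, sub_mul, ← mOfW_ofList_append,
    List.append_assoc, List.cons_append, List.nil_append] using this

end Congruence

namespace IsQHS

variable {K : Type*} [Field K] {X : Type*} [LinearOrder X]
  {M : Set (MonoidAlgebra K (FreeMonoid X))}

lemma eq_m2_or_eq_m2_sub_m2 (hM : IsQHS K M) {g : MonoidAlgebra K (FreeMonoid X)}
    (hg : g ∈ M) :
    (∃ a b : X, g = m2 K a b) ∨ ∃ a b c d : X, c ≤ b ∧ d < b ∧ g = m2 K a b - m2 K c d := by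
  rcases hM.2.2 g hg with
    ⟨a, b, -, rfl⟩ | ⟨a, b, c, d, hdc, hcb, -, rfl⟩ | ⟨a, b, d, hdb, -, rfl⟩
  · exact .inl ⟨a, b, rfl⟩
  · exact .inr ⟨a, b, c, d, hcb.le, hdc.trans_lt hcb, rfl⟩
  · exact .inr ⟨a, b, b, d, le_rfl, hdb, rfl⟩

lemma exists_mem_suppOf (hM : IsQHS K M) {x y : X} (hyx : y ≤ x) :
    ∃ g ∈ M, FreeMonoid.of x * FreeMonoid.of y ∈ suppOf g := by
  have : FreeMonoid.of x * FreeMonoid.of y ∈ ⋃ g ∈ M, (suppOf g : Set (FreeMonoid X)) :=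
    hM.2.1 ▸ ⟨x, y, hyx, rfl⟩
  simpa only [Set.mem_iUnion₂, exists_prop, Finset.mem_coe] using this

lemma descent_cases [Fintype X] [Nonempty X] (hM : IsQHS K M) {x y : X} (hyx : y ≤ x) :
    x = topEl X ∨ m2 K x y ∈ M \ {m2 K (topEl X) (botEl X)} ∨
      (∃ a b, x ≤ b ∧ m2 K a b - m2 K x y ∈ M \ {m2 K (topEl X) (botEl X)}) ∨
      ∃ c d, d < y ∧ m2 K x y - m2 K c d ∈ M \ {m2 K (topEl X) (botEl X)} := by
  obtain ⟨g, hgM, hxy⟩ := hM.exists_mem_suppOf hyx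
  rcases hM.eq_m2_or_eq_m2_sub_m2 hgM with ⟨a, b, rfl⟩ | ⟨a, b, c, d, hcb, hdb, rfl⟩
  · obtain ⟨rfl, rfl⟩ := eq_of_mem_suppOf_m2 hxy
    by_cases hx : x = topEl X
    · exact .inl hx
    · exact .inr (.inl ⟨hgM, fun h => hx (m2_eq_m2_iff.mp h).1⟩)
  · have hg : m2 K a b - m2 K c d ∈ M \ {m2 K (topEl X) (botEl X)} :=
      ⟨hgM, m2_sub_m2_ne_m2 hdb.ne'⟩
    rcases eq_of_mem_suppOf_m2_sub_m2 hxy with ⟨rfl, rfl⟩ | ⟨rfl, rfl⟩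
    · exact .inr (.inr (.inr ⟨c, d, hdb, hg⟩))
    · exact .inr (.inr (.inl ⟨a, b, hcb, hg⟩))

end IsQHS

section Positions

variable {X : Type*} {n : ℕ}

lemma exists_ofFn_eq (l : List X) (hl : l.length = n) : ∃ f : Fin n → X, List.ofFn f = l := by
  subst hl
  exact ⟨l.get, List.ofFn_get l⟩

lemma apply_eq_getElem_of_ofFn_eq_append {f : Fin n → X} {t s : List X}
    (h : List.ofFn f = t ++ s) (i : Fin n) (hi : t.length ≤ i) :
    f i = s[(i : ℕ) - t.length]'(by have := congrArg List.length h; simp at this; omega) := by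
  have h' := List.getElem_of_eq h (i := i) (by simp)
  rwa [List.getElem_ofFn, List.getElem_append_right hi] at h'

lemma apply_eq_of_ofFn_eq_append_cons {f : Fin n → X} {t s : List X} {z : X}
    (h : List.ofFn f = t ++ z :: s) (i : Fin n) (hi : (i : ℕ) = t.length) : f i = z := by
  simp [apply_eq_getElem_of_ofFn_eq_append h i hi.ge, hi]

lemma apply_eq_apply_of_ofFn_eq_append {f g : Fin n → X} {t t' s : List X}
    (hf : List.ofFn f = t ++ s) (hg : List.ofFn g = t' ++ s) (ht : t.length = t'.length)
    (i : Fin n) (hi : t.length ≤ i) : f i = g i := by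
  simp [apply_eq_getElem_of_ofFn_eq_append hf i hi,
    apply_eq_getElem_of_ofFn_eq_append hg i (ht ▸ hi), ht]

end Positions

section Singular

variable {K : Type*} [Field K] {X : Type*} [Fintype X] [LinearOrder X] [Nonempty X]
  {M : Set (MonoidAlgebra K (FreeMonoid X))} {m : ℕ} {u : Fin m → X}

lemma MinimalMon.not_qhsCong_of_mem (hu : MinimalMon K M u) {w : List X}
    (hw : mOfW K (FreeMonoid.ofList w) ∈ qhsIdeal K M) : ¬ QHSCong K M (List.ofFn u) w :=
  fun hC => hu.1 ((Submodule.sub_mem_iff_left _ hw).mp hC)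

lemma MinimalMon.not_qhsCong_of_lt (hu : MinimalMon K M u) {t p s : List X} {y d : X}
    (hU : List.ofFn u = t ++ y :: s) (hp : p.length = t.length) (hdy : d < y) :
    ¬ QHSCong K M (List.ofFn u) (p ++ d :: s) := by
  intro hC
  have hlen : m = t.length + (s.length + 1) := by simpa using congrArg List.length hU
  obtain ⟨w, hw⟩ := exists_ofFn_eq (n := m) (p ++ d :: s) (by simp; omega)
  let i : Fin m := ⟨t.length, by omega⟩
  have hui : u i = y := apply_eq_of_ofFn_eq_append_cons hU i rfl
  have hwi : w i = d := apply_eq_of_ofFn_eq_append_cons hw i hp.symm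
  have hagree : ∀ l : Fin m, i < l → u l = w l := fun l hl =>
    apply_eq_apply_of_ofFn_eq_append (t := t ++ [y]) (t' := p ++ [d]) (by simpa using hU)
      (by simpa using hw) (by simp [hp]) l (by simp [Fin.lt_def, i] at hl ⊢; omega)
  rcases hu.2 w (qhsCong_ofFn_iff.mp (hw ▸ hC)) with rfl | ⟨j, hj, hj'⟩
  · exact hdy.ne (hwi.symm.trans hui)
  · rcases lt_trichotomy j i with hji | rfl | hij
    · exact hdy.ne (hwi.symm.trans ((hj' i hji).symm.trans hui))
    · exact (hwi ▸ hui ▸ hj).asymm hdy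
    · exact (hagree j hij ▸ hj).false

lemma SingularMon.not_qhsCong_top (hu : SingularMon K M u) {t p s : List X}
    (hU : List.ofFn u = t ++ s) (hp : p.length + 1 = t.length) :
    ¬ QHSCong K M (List.ofFn u) (p ++ topEl X :: s) := by
  intro hC
  have hlen : m = t.length + s.length := by simpa using congrArg List.length hU
  obtain ⟨w, hw⟩ := exists_ofFn_eq (n := m) (p ++ topEl X :: s) (by simp; omega)
  refine hu.2 ⟨hu.1, w, ⟨p.length, by omega⟩, qhsCong_ofFn_iff.mp (hw ▸ hC),
    apply_eq_of_ofFn_eq_append_cons hw _ rfl, fun l hl => ?_⟩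
  exact apply_eq_apply_of_ofFn_eq_append (t := p ++ [topEl X]) (by simpa using hw) hU
    (by simp [hp]) l (by simp [Fin.lt_def] at hl ⊢; omega)

end Singular

section Replacement

variable {K : Type*} [Field K] {X : Type*} [Fintype X] [LinearOrder X] [Nonempty X]
  {M : Set (MonoidAlgebra K (FreeMonoid X))} {m : ℕ} {u : Fin m → X}

lemma exists_qhsCong_shift (hM : IsQHS K M) (hu : SingularMon K M u) {t p s : List X}
    {x y : X} (hU : List.ofFn u = t ++ y :: s) (hp : p.length + 1 = t.length)
    (hC : QHSCong K M (List.ofFn u) (p ++ x :: y :: s)) :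
    ∃ p' x', p'.length = t.length ∧ QHSCong K M (List.ofFn u) (p' ++ x' :: s) ∧ x ≤ x' ∧
      (PureEl K M y → x < x') := by
  rcases lt_or_ge x y with hxy | hyx
  · exact ⟨p ++ [x], y, by simp [hp], by simpa using hC, hxy.le, fun _ => hxy⟩
  rcases hM.descent_cases hyx with rfl | hxy | ⟨a, b, hxb, hg⟩ | ⟨c, d, hdy, hg⟩
  · exact absurd hC (hu.not_qhsCong_top (s := y :: s) hU hp)
  · exact absurd hC (hu.1.not_qhsCong_of_mem (mOfW_mem_qhsIdeal_of_m2_mem hxy p s))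
  · refine ⟨p ++ [a], b, by simp [hp], ?_, hxb, fun hy => (hy a b x hg.1).2.1⟩
    simpa using hC.trans (qhsCong_of_m2_sub_m2_mem hg p s).symm
  · refine absurd (hC.trans (qhsCong_of_m2_sub_m2_mem hg p s)) ?_
    simpa using hu.1.not_qhsCong_of_lt (p := p ++ [c]) hU (by simp [hp]) hdy

lemma exists_qhsCong_lt_last (hM : IsQHS K M) (hu : SingularMon K M u) {e : X}
    (he : PureEl K M e) (s : List X) {t p : List X} {x : X} (hU : List.ofFn u = t ++ s ++ [e])
    (hp : p.length + 1 = t.length) (hC : QHSCong K M (List.ofFn u) (p ++ x :: (s ++ [e]))) :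
    ∃ q z, q.length + 1 = m ∧ QHSCong K M (List.ofFn u) (q ++ [z]) ∧ x < z := by
  induction s generalizing t p x with
  | nil =>
    obtain ⟨p', x', hp', hC', -, hlt⟩ :=
      exists_qhsCong_shift hM hu (s := []) (by simpa using hU) hp hC
    have hlen : m = t.length + 1 := by simpa using congrArg List.length hU
    exact ⟨p', x', by omega, hC', hlt he⟩
  | cons y s ih =>
    obtain ⟨p', x', hp', hC', hle, -⟩ :=
      exists_qhsCong_shift hM hu (s := s ++ [e]) (by simpa using hU) hp hC
    obtain ⟨q, z, hq, hCq, hlt⟩ := ih (t := t ++ [y]) (by simpa using hU) (by simp [hp']) hC'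
    exact ⟨q, z, hq, hCq, hle.trans_lt hlt⟩

end Replacement

/-- **Lemma (singp).** If `u = u_1 … u_m` is singular with `u_m` pure, `1 ≤ k < m`
and `v = v_1 … v_k` satisfies `v = u_1 … u_k (mod I_M)`, then there is a degree-`m`
monomial `w` with `w_m > v_k` and `u = w (mod I_M)`. -/
theorem singular_pure_last_letter_replacement
    (K : Type*) [Field K] (X : Type*) [Fintype X] [LinearOrder X] [Nonempty X]
    (M : Set (MonoidAlgebra K (FreeMonoid X))) (hM : IsQHS K M)
    (m k : ℕ) (hk1 : 1 ≤ k) (hk : k < m) (u : Fin m → X)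
    (hu : SingularMon K M u)
    (hpure : PureEl K M (u ⟨m - 1, by omega⟩))
    (v : Fin k → X)
    (hv : mOf K v - mOf K (fun i : Fin k => u (Fin.castLE (le_of_lt hk) i)) ∈ qhsIdeal K M) :
    ∃ w : Fin m → X,
      v ⟨k - 1, by omega⟩ < w ⟨m - 1, by omega⟩ ∧
      mOf K u - mOf K w ∈ qhsIdeal K M := by
  obtain ⟨n, rfl⟩ := Nat.exists_eq_add_of_lt hk
  set e := u ⟨k + n + 1 - 1, by omega⟩
  set S := List.ofFn fun j : Fin n => u (Fin.natAdd k j.castSucc)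
  have hU : List.ofFn u =
      List.ofFn (fun i : Fin k => u (Fin.castLE (le_of_lt hk) i)) ++ S ++ [e] := by
    rw [List.ofFn_succ', List.ofFn_add]
    simp only [List.concat_eq_append, List.append_assoc]
    rfl
  have hv' : List.ofFn v = (List.ofFn v).dropLast ++ [v ⟨k - 1, by omega⟩] := by
    have := List.dropLast_append_getLast (l := List.ofFn v) (by simp; omega)
    rwa [List.getLast_ofFn, eq_comm] at this
  have hC : QHSCong K M (List.ofFn u)
      ((List.ofFn v).dropLast ++ v ⟨k - 1, by omega⟩ :: (S ++ [e])) := by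
    have := (qhsCong_ofFn_iff.mpr hv).symm.append_right (S ++ [e])
    rw [hv'] at this
    rw [hU]
    simpa using this
  obtain ⟨q, z, hq, hCq, hlt⟩ := exists_qhsCong_lt_last hM hu hpure S hU (by simp; omega) hC
  obtain ⟨w, hw⟩ := exists_ofFn_eq (n := k + n + 1) (q ++ [z]) (by simp [hq])
  have hwz : w ⟨k + n + 1 - 1, by omega⟩ = z :=
    apply_eq_of_ofFn_eq_append_cons hw _ (by simp; omega)
  exact ⟨w, hwz ▸ hlt, qhsCong_ofFn_iff.mp (hw ▸ hCq)⟩
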